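/- Let μ be a probability measure on a measurable space Ω, let T, A, C be measurable subsets of Ω with μ(A) > 0 and μ(C) > 0, let γ be a countable type whose singletons are measurable, let W : Ω → γ be measurable, and let ε ≥ 0 be real. Assume: (i) for every w ∈ γ, μ[{W = w} | A] = μ[{W = w} | C]; and (ii) for every w ∈ γ with μ(A ∩ {W = w}) > 0 and μ(C ∩ {W = w}) > 0, one has exp(−ε)·μ[T | C ∩ {W = w}] ≤ μ[T | A ∩ {W = w}] ≤ exp(ε)·μ[T | C ∩ {W = w}]. Then exp(−ε)·μ[T | C] ≤ μ[T | A] ≤ exp(ε)·μ[T | C]. -/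

import Mathlib

open MeasureTheory

/-- Conditional probability `μ[A | B] = μ(A ∩ B) / μ(B)` as a real number. -/
noncomputable def condP {Ω : Type*} [MeasurableSpace Ω] (μ : Measure Ω) (A B : Set Ω) : ℝ :=
  (μ (A ∩ B)).toReal / (μ B).toReal

/-!
Conditioning on the value of `W` splits `μ[T | A]` into the countable sum
`∑_w μ[T | A ∩ {W = w}] · μ[W = w | A]`, and likewise for `C`. The weights agree by (i), and
wherever they are positive (ii) compares the `w`-th terms; summing gives the bounds.
-/

section

variable {Ω : Type*} [MeasurableSpace Ω] (μ : Measure Ω)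

theorem condP_nonneg (S B : Set Ω) : 0 ≤ condP μ S B :=
  div_nonneg ENNReal.toReal_nonneg ENNReal.toReal_nonneg

variable {μ} in
theorem measure_inter_toReal_pos_of_condP_pos {E B : Set Ω} (h : 0 < condP μ E B) :
    0 < (μ (B ∩ E)).toReal := by
  rw [Set.inter_comm]
  refine ENNReal.toReal_nonneg.lt_of_ne fun h0 => h.ne' ?_
  rw [condP, ← h0, zero_div]

/-- When `μ (B ∩ E) = 0` both sides vanish, the left one through `x / 0 = 0`. -/
theorem condP_mul_condP [IsFiniteMeasure μ] (S B E : Set Ω) :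
    condP μ S (B ∩ E) * condP μ E B = condP μ (S ∩ E) B := by
  have hSBE : S ∩ (B ∩ E) = S ∩ E ∩ B := by rw [Set.inter_assoc, Set.inter_comm B]
  rcases (ENNReal.toReal_nonneg (a := μ (B ∩ E))).eq_or_lt with h0 | hpos
  · have hnull : μ (B ∩ E) = 0 :=
      ((ENNReal.toReal_eq_zero_iff _).1 h0.symm).resolve_right (measure_ne_top μ _)
    have hSnull : μ (S ∩ E ∩ B) = 0 := measure_mono_null (hSBE ▸ Set.inter_subset_right) hnull
    simp [condP, ← h0, hSnull]
  · rw [condP, condP, condP, Set.inter_comm E B, hSBE, div_mul_div_cancel₀ hpos.ne']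

end

section

variable {Ω γ : Type*} [MeasurableSpace Ω] [MeasurableSpace γ] [Countable γ]
  [MeasurableSingletonClass γ] (μ : Measure Ω) {W : Ω → γ}

/-- The fibres of `W` are measurable, so this holds for every set `S`, measurable or not. -/
theorem tsum_measure_inter_fiber (hW : Measurable W) (S : Set Ω) :
    ∑' w, μ (S ∩ {ω | W ω = w}) = μ S := by
  have hfib : ∀ w, MeasurableSet {ω | W ω = w} := fun w => hW (measurableSet_singleton w)
  have hdisj : Pairwise (Function.onFun Disjoint fun w : γ => {ω | W ω = w}) :=
    fun w v hwv => Set.disjoint_left.2 fun _ hw hv => hwv (hw.symm.trans hv)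
  have hcover : (⋃ w : γ, {ω | W ω = w}) = Set.univ := Set.iUnion_eq_univ_iff.2 fun ω => ⟨W ω, rfl⟩
  calc ∑' w, μ (S ∩ {ω | W ω = w})
      = Measure.sum (fun w => μ.restrict {ω | W ω = w}) S := by
        simp only [Measure.sum_apply_of_countable, Measure.restrict_apply' (hfib _)]
    _ = μ S := by rw [← Measure.restrict_iUnion hdisj hfib, hcover, Measure.restrict_univ]

theorem hasSum_measure_toReal_inter_fiber [IsFiniteMeasure μ] (hW : Measurable W) (S : Set Ω) :
    HasSum (fun w => (μ (S ∩ {ω | W ω = w})).toReal) (μ S).toReal := by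
  have hfin : ∑' w, μ (S ∩ {ω | W ω = w}) ≠ ⊤ := by
    rw [tsum_measure_inter_fiber μ hW]; exact measure_ne_top μ S
  simpa only [← ENNReal.tsum_toReal_eq fun w => ne_top_of_le_ne_top hfin (ENNReal.le_tsum w),
    tsum_measure_inter_fiber μ hW] using ENNReal.hasSum_toReal hfin

theorem hasSum_condP_inter_fiber [IsFiniteMeasure μ] (hW : Measurable W) (S B : Set Ω) :
    HasSum (fun w => condP μ (S ∩ {ω | W ω = w}) B) (condP μ S B) := by
  have h := (hasSum_measure_toReal_inter_fiber μ hW (S ∩ B)).div_const (μ B).toReal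
  refine h.congr_fun fun w => ?_
  rw [condP, Set.inter_right_comm]

end

theorem stmt_0 {Ω γ : Type*} [MeasurableSpace Ω] [MeasurableSpace γ] [Countable γ]
    [MeasurableSingletonClass γ]
    (μ : Measure Ω) [IsProbabilityMeasure μ]
    (T A C : Set Ω)
    (W : Ω → γ) (hW : Measurable W) (ε : ℝ)
    (h1 : ∀ w : γ, condP μ {ω | W ω = w} A = condP μ {ω | W ω = w} C)
    (h2 : ∀ w : γ, 0 < (μ (A ∩ {ω | W ω = w})).toReal →
      0 < (μ (C ∩ {ω | W ω = w})).toReal →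
      Real.exp (-ε) * condP μ T (C ∩ {ω | W ω = w}) ≤ condP μ T (A ∩ {ω | W ω = w}) ∧
      condP μ T (A ∩ {ω | W ω = w}) ≤ Real.exp ε * condP μ T (C ∩ {ω | W ω = w})) :
    Real.exp (-ε) * condP μ T C ≤ condP μ T A ∧
    condP μ T A ≤ Real.exp ε * condP μ T C := by
  have hterm : ∀ w, Real.exp (-ε) * condP μ (T ∩ {ω | W ω = w}) C ≤
        condP μ (T ∩ {ω | W ω = w}) A ∧
      condP μ (T ∩ {ω | W ω = w}) A ≤ Real.exp ε * condP μ (T ∩ {ω | W ω = w}) C := by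
    intro w
    rw [← condP_mul_condP μ T A, ← condP_mul_condP μ T C, h1 w, ← mul_assoc, ← mul_assoc]
    rcases (condP_nonneg μ {ω | W ω = w} C).eq_or_lt with hp | hp
    · simp [← hp]
    · obtain ⟨hlow, hupp⟩ := h2 w (measure_inter_toReal_pos_of_condP_pos (h1 w ▸ hp))
        (measure_inter_toReal_pos_of_condP_pos hp)
      exact ⟨mul_le_mul_of_nonneg_right hlow hp.le, mul_le_mul_of_nonneg_right hupp hp.le⟩
  have hTA := hasSum_condP_inter_fiber μ hW T A
  have hTC := hasSum_condP_inter_fiber μ hW T C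
  exact ⟨hasSum_le (fun w => (hterm w).1) (hTC.mul_left _) hTA,
    hasSum_le (fun w => (hterm w).2) hTA (hTC.mul_left _)⟩
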